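/- arXiv:2004.06945 — 5 statements merged into one kernel-verified Lean document; each statement's English description precedes it below -/
import Mathlib

section
/- In a regular quasi-shuffle algebra, the products X ⪯ Y := X ≺ Y + (1/2)[X,Y] and X ⪰ Y := X ≻ Y + (1/2)[X,Y] satisfy the non-commutative shuffle (dendriform) axioms: (X ⪯ Y) ⪯ Z = X ⪯ (YZ), (X ⪰ Y) ⪯ Z = X ⪰ (Y ⪯ Z), X ⪰ (Y ⪰ Z) = (XY) ⪰ Z, where XY = X ≺ Y + X ≻ Y + [X,Y] = X ⪯ Y + X ⪰ Y. -/
/-- In a regular quasi-shuffle algebra the Stratonovich half-shuffles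
`X ⪯ Y = X ≺ Y + ½[X,Y]` and `X ⪰ Y = X ≻ Y + ½[X,Y]` satisfy the dendriform axioms. -/
theorem stmt_5 {K A : Type*} [Field K] [CharZero K] [AddCommGroup A] [Module K A]
    (p s b : A →ₗ[K] A →ₗ[K] A)
    (mul : A → A → A)
    (hmul : ∀ X Y, mul X Y = p X Y + s X Y + b X Y)
    (h1 : ∀ X Y Z, p (p X Y) Z = p X (mul Y Z))
    (h2 : ∀ X Y Z, s X (s Y Z) = s (mul X Y) Z)
    (h3 : ∀ X Y Z, p (s X Y) Z = s X (p Y Z))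
    (h5 : ∀ X Y Z, b (s X Y) Z = s X (b Y Z))
    (h6 : ∀ X Y Z, b (p X Y) Z = b X (s Y Z))
    (h7 : ∀ X Y Z, p (b X Y) Z = b X (p Y Z))
    (h4 : ∀ X Y Z, b (b X Y) Z = b X (b Y Z))
    (hreg : ∀ X Y Z, b (b X Y) Z = 0)
    (pce sce : A → A → A)
    (hpce : ∀ X Y, pce X Y = p X Y + (2:K)⁻¹ • b X Y)
    (hsce : ∀ X Y, sce X Y = s X Y + (2:K)⁻¹ • b X Y) :
    (∀ X Y Z, pce (pce X Y) Z = pce X (mul Y Z)) ∧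
    (∀ X Y Z, pce (sce X Y) Z = sce X (pce Y Z)) ∧
    (∀ X Y Z, sce X (sce Y Z) = sce (mul X Y) Z) ∧
    (∀ X Y, mul X Y = pce X Y + sce X Y) := by

  have hb0 : ∀ X Y Z : A, b X (b Y Z) = 0 := fun X Y Z => (h4 X Y Z).symm.trans (hreg X Y Z)
  refine ⟨fun X Y Z => ?_, fun X Y Z => ?_, fun X Y Z => ?_, fun X Y => ?_⟩
  · simp only [hpce, hmul, map_add, map_smul, LinearMap.add_apply, LinearMap.smul_apply,
      h1, h3, h5, h6, h7, hreg, hb0, smul_zero]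
    module
  · simp only [hpce, hsce, map_add, map_smul, LinearMap.add_apply, LinearMap.smul_apply,
      h1, h3, h5, h6, h7, hreg, hb0, smul_zero]
    module
  · simp only [hsce, hmul, map_add, map_smul, LinearMap.add_apply, LinearMap.smul_apply,
      h2, h3, h5, h6, h7, hreg, hb0, smul_zero]
    module
  · rw [hmul, hpce, hsce]
    have : ((2:K)⁻¹ + (2:K)⁻¹) = 1 := by norm_num
    rw [show p X Y + (2:K)⁻¹ • b X Y + (s X Y + (2:K)⁻¹ • b X Y)
        = p X Y + s X Y + ((2:K)⁻¹ + (2:K)⁻¹) • b X Y by module, this, one_smul]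
end

section
/- Let (A, ≺, ≻, [·,·]) be a quasi-shuffle algebra. Define X ⋗ Y := X ≻ Y + [X,Y]. Then (A, ≺, ⋗) is a non-commutative shuffle (dendriform) algebra: (X ≺ Y) ≺ Z = X ≺ (YZ), (X ⋗ Y) ≺ Z = X ⋗ (Y ≺ Z), and (XY) ⋗ Z = X ⋗ (Y ⋗ Z), where XY = X ≺ Y + X ⋗ Y. -/
/-- Any quasi-shuffle algebra yields a dendriform algebra via `X ⋗ Y := X ≻ Y + [X,Y]`. -/
theorem stmt_9 {K A : Type*} [Field K] [CharZero K] [AddCommGroup A] [Module K A]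
    (p s b : A →ₗ[K] A →ₗ[K] A)
    (mul : A → A → A)
    (hmul : ∀ X Y, mul X Y = p X Y + s X Y + b X Y)
    (h1 : ∀ X Y Z, p (p X Y) Z = p X (mul Y Z))
    (h2 : ∀ X Y Z, s X (s Y Z) = s (mul X Y) Z)
    (h3 : ∀ X Y Z, p (s X Y) Z = s X (p Y Z))
    (h5 : ∀ X Y Z, b (s X Y) Z = s X (b Y Z))
    (h6 : ∀ X Y Z, b (p X Y) Z = b X (s Y Z))
    (h7 : ∀ X Y Z, p (b X Y) Z = b X (p Y Z))
    (h4 : ∀ X Y Z, b (b X Y) Z = b X (b Y Z))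
    (sdot : A → A → A) (hsdot : ∀ X Y, sdot X Y = s X Y + b X Y) :
    (∀ X Y Z, p (p X Y) Z = p X (mul Y Z)) ∧
    (∀ X Y Z, p (sdot X Y) Z = sdot X (p Y Z)) ∧
    (∀ X Y Z, sdot (mul X Y) Z = sdot X (sdot Y Z)) ∧
    (∀ X Y, mul X Y = p X Y + sdot X Y) := by
  refine ⟨h1, fun X Y Z => ?_, fun X Y Z => ?_, fun X Y => ?_⟩
  · simp [hsdot, map_add, h3, h7]
  · simp [hsdot, hmul, map_add, h2, h5, h6, h4]; abel
  · simp [hsdot, hmul]; abel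
end

section
/- Let (A, ≺, ≻, [·,·]) be a quasi-shuffle algebra with associative full product XY = X ≺ Y + X ≻ Y + [X,Y]. Define X ▶ Y := X ≻ Y + [X,Y] − Y ≺ X. Then ▶ is a left pre-Lie product, and its commutator satisfies X ▶ Y − Y ▶ X = XY − YX. -/
/-- In a quasi-shuffle algebra with associative full product,
`X ▶ Y := X ≻ Y + [X,Y] − Y ≺ X` is left pre-Lie and its commutator is the
associative commutator. -/
theorem stmt_10 {K A : Type*} [Field K] [CharZero K] [AddCommGroup A] [Module K A]
    (p s b : A →ₗ[K] A →ₗ[K] A)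
    (mul : A → A → A)
    (hmul : ∀ X Y, mul X Y = p X Y + s X Y + b X Y)
    (hassoc : ∀ X Y Z, mul (mul X Y) Z = mul X (mul Y Z))
    (h1 : ∀ X Y Z, p (p X Y) Z = p X (mul Y Z))
    (h2 : ∀ X Y Z, s X (s Y Z) = s (mul X Y) Z)
    (h3 : ∀ X Y Z, p (s X Y) Z = s X (p Y Z))
    (h5 : ∀ X Y Z, b (s X Y) Z = s X (b Y Z))
    (h6 : ∀ X Y Z, b (p X Y) Z = b X (s Y Z))
    (h7 : ∀ X Y Z, p (b X Y) Z = b X (p Y Z))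
    (h4 : ∀ X Y Z, b (b X Y) Z = b X (b Y Z))
    (btri : A → A → A) (hbtri : ∀ X Y, btri X Y = s X Y + b X Y - p Y X) :
    (∀ X Y Z, btri X (btri Y Z) - btri (btri X Y) Z
        = btri Y (btri X Z) - btri (btri Y X) Z) ∧
    (∀ X Y, btri X Y - btri Y X = mul X Y - mul Y X) := by
  constructor
  · intro X Y Z
    simp only [hbtri, hmul, map_add, map_sub, LinearMap.add_apply, LinearMap.sub_apply,
      h1, h2, h3, h4, h5, h6, h7]
    abel
  · intro X Y
    simp only [hbtri, hmul]
    abel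
end

section
/- In an associative algebra A over a field of characteristic zero equipped with a Rota–Baxter operator R of weight 0, the product x ▷ y := R(x)y − yR(x) defines a left pre-Lie algebra structure on A. -/
/-- A weight-zero Rota–Baxter operator yields a left pre-Lie product
`x ▷ y := R(x)y − yR(x)`. -/
theorem stmt_13 {K A : Type*} [Field K] [CharZero K] [Ring A] [Algebra K A]
    (R : A →ₗ[K] A)
    (hR : ∀ x y : A, R x * R y = R (R x * y + x * R y))
    (tri : A → A → A) (htri : ∀ x y, tri x y = R x * y - y * R x) :
    ∀ x y z, tri x (tri y z) - tri (tri x y) z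
      = tri y (tri x z) - tri (tri y x) z := by
  intro x y z
  have h1 := hR x y
  have h2 := hR y x
  rw [map_add] at h1 h2
  have hu : R (R x * y) = R x * R y - R (x * R y) := eq_sub_of_add_eq h1.symm
  have hv : R (R y * x) = R y * R x - R (y * R x) := eq_sub_of_add_eq h2.symm
  simp only [htri, map_sub, hu, hv]
  noncomm_ring
end

section
/- Let M be a (not necessarily commutative) monoid and let A be the free vector space on words (finite sequences) over M. Define inductively, for words X = x₁⋯xₙ and Y = y₁⋯yₘ with letters in M: X ≺ Y := x₁(x₂⋯xₙ * Y), X ≻ Y := y₁(X * y₂⋯yₘ), [X,Y] := (x₁·y₁)(x₂⋯xₙ * y₂⋯yₘ), with the empty word acting as unit, and X*Y := X ≺ Y + X ≻ Y + [X,Y]. Then the product * is associative. -/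
open Finsupp

/-- The quasi-shuffle product of words over a monoid `M`, with values in the free
vector space on words, defined by the mutual recursion
`X*Y = X ≺ Y + X ≻ Y + [X,Y]` where `X ≺ Y = x₁(x₂⋯xₙ * Y)`,
`X ≻ Y = y₁(X * y₂⋯yₘ)`, `[X,Y] = (x₁·y₁)(x₂⋯xₙ * y₂⋯yₘ)`,
and the empty word is the unit. -/
noncomputable def qmul {K M : Type*} [Field K] [Monoid M] :
    List M → List M → (List M →₀ K)
  | [], Y => Finsupp.single Y 1
  | x :: xs, [] => Finsupp.single (x :: xs) 1
  | x :: xs, y :: ys =>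
      (qmul xs (y :: ys)).mapDomain (x :: ·)
      + (qmul (x :: xs) ys).mapDomain (y :: ·)
      + (qmul xs ys).mapDomain ((x * y) :: ·)
  termination_by X Y => X.length + Y.length
  decreasing_by all_goals (simp; try omega)

/-! Extend `qmul` linearly in each argument. Since `(aX) * (zZ) = a(X * zZ) + z(aX * Z) + (az)(X * Z)`
holds for linear combinations `X` of words as well, expanding `(xX * yY) * zZ` and
`xX * (yY * zZ)` gives seven terms on each side; they match pairwise by induction on the total
length, the two terms with first letter `xyz` using associativity of `M`. -/

theorem Finsupp.linearCombination_single_one {α R : Type*} [Semiring R] (f : α →₀ R) :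
    linearCombination R (fun a => single a (1 : R)) f = f := by
  simp [linearCombination_apply]

namespace QuasiShuffle

variable {K M : Type*} [Field K] [Monoid M]

noncomputable def prepend (a : M) : (List M →₀ K) →ₗ[K] (List M →₀ K) :=
  lmapDomain K K (List.cons a)

noncomputable def mulRight (Z : List M) : (List M →₀ K) →ₗ[K] (List M →₀ K) :=
  linearCombination K (fun W => qmul W Z)

noncomputable def mulLeft (X : List M) : (List M →₀ K) →ₗ[K] (List M →₀ K) :=
  linearCombination K (qmul X)

theorem qmul_nil_left (Y : List M) : qmul (K := K) [] Y = single Y 1 := by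
  rw [qmul]

theorem qmul_nil_right (X : List M) : qmul (K := K) X [] = single X 1 := by
  cases X <;> rw [qmul]

theorem qmul_cons_cons (x y : M) (xs ys : List M) :
    qmul (K := K) (x :: xs) (y :: ys)
      = prepend x (qmul xs (y :: ys)) + prepend y (qmul (x :: xs) ys)
        + prepend (x * y) (qmul xs ys) := by
  rw [qmul]; rfl

theorem mulRight_nil (f : List M →₀ K) : mulRight [] f = f := by
  simp only [mulRight, qmul_nil_right, linearCombination_single_one]

theorem mulLeft_nil (f : List M →₀ K) : mulLeft [] f = f := by
  simp only [mulLeft, funext qmul_nil_left, linearCombination_single_one]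

theorem mulRight_single_one (W Z : List M) : mulRight Z (single W (1 : K)) = qmul W Z := by
  simp [mulRight]

theorem mulLeft_single_one (X W : List M) : mulLeft X (single W (1 : K)) = qmul X W := by
  simp [mulLeft]

theorem mulRight_cons_prepend (a z : M) (zs : List M) (f : List M →₀ K) :
    mulRight (z :: zs) (prepend a f)
      = prepend a (mulRight (z :: zs) f) + prepend z (mulRight zs (prepend a f))
        + prepend (a * z) (mulRight zs f) := by
  induction f using Finsupp.induction_linear with
  | zero => simp
  | add f g hf hg => simp only [map_add, hf, hg]; abel
  | single W c => simp [mulRight, prepend, qmul_cons_cons, smul_add]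

theorem mulLeft_cons_prepend (x b : M) (xs : List M) (f : List M →₀ K) :
    mulLeft (x :: xs) (prepend b f)
      = prepend x (mulLeft xs (prepend b f)) + prepend b (mulLeft (x :: xs) f)
        + prepend (x * b) (mulLeft xs f) := by
  induction f using Finsupp.induction_linear with
  | zero => simp
  | add f g hf hg => simp only [map_add, hf, hg]; abel
  | single W c => simp [mulLeft, prepend, qmul_cons_cons, smul_add]

theorem mulRight_cons_qmul_cons_cons (x y z : M) (xs ys zs : List M) :
    mulRight (z :: zs) (qmul (K := K) (x :: xs) (y :: ys))
      = prepend x (mulRight (z :: zs) (qmul xs (y :: ys)))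
        + prepend y (mulRight (z :: zs) (qmul (x :: xs) ys))
        + prepend (x * y) (mulRight (z :: zs) (qmul xs ys))
        + prepend z (mulRight zs (qmul (x :: xs) (y :: ys)))
        + prepend (x * z) (mulRight zs (qmul xs (y :: ys)))
        + prepend (y * z) (mulRight zs (qmul (x :: xs) ys))
        + prepend (x * y * z) (mulRight zs (qmul xs ys)) := by
  simp only [qmul_cons_cons x y, map_add, mulRight_cons_prepend]
  abel

theorem mulLeft_cons_qmul_cons_cons (x y z : M) (xs ys zs : List M) :
    mulLeft (x :: xs) (qmul (K := K) (y :: ys) (z :: zs))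
      = prepend x (mulLeft xs (qmul (y :: ys) (z :: zs)))
        + prepend y (mulLeft (x :: xs) (qmul ys (z :: zs)))
        + prepend (x * y) (mulLeft xs (qmul ys (z :: zs)))
        + prepend z (mulLeft (x :: xs) (qmul (y :: ys) zs))
        + prepend (x * z) (mulLeft xs (qmul (y :: ys) zs))
        + prepend (y * z) (mulLeft (x :: xs) (qmul ys zs))
        + prepend (x * (y * z)) (mulLeft xs (qmul ys zs)) := by
  simp only [qmul_cons_cons y z, map_add, mulLeft_cons_prepend]
  abel

theorem mulRight_qmul (X Y Z : List M) :
    mulRight Z (qmul (K := K) X Y) = mulLeft X (qmul Y Z) :=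
  match X, Y, Z with
  | [], Y, Z => by rw [qmul_nil_left, mulRight_single_one, mulLeft_nil]
  | X, [], Z => by rw [qmul_nil_right, mulRight_single_one, qmul_nil_left, mulLeft_single_one]
  | X, Y, [] => by rw [mulRight_nil, qmul_nil_right, mulLeft_single_one]
  | x :: xs, y :: ys, z :: zs => by
    rw [mulRight_cons_qmul_cons_cons, mulLeft_cons_qmul_cons_cons, mul_assoc,
      mulRight_qmul xs (y :: ys) (z :: zs), mulRight_qmul (x :: xs) ys (z :: zs),
      mulRight_qmul xs ys (z :: zs), mulRight_qmul (x :: xs) (y :: ys) zs,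
      mulRight_qmul xs (y :: ys) zs, mulRight_qmul (x :: xs) ys zs, mulRight_qmul xs ys zs]
termination_by X.length + Y.length + Z.length

end QuasiShuffle

theorem stmt_14_general {K M : Type*} [Field K] [Monoid M] :
    ∀ X Y Z : List M,
      (qmul (K := K) X Y).sum (fun W a => a • (qmul W Z : List M →₀ K))
        = (qmul (K := K) Y Z).sum (fun W a => a • (qmul X W : List M →₀ K)) :=
  QuasiShuffle.mulRight_qmul

/-- The bilinear extension of the quasi-shuffle product of words over a monoid is
associative. -/
theorem stmt_14 {K M : Type*} [Field K] [CharZero K] [Monoid M] :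
    ∀ X Y Z : List M,
      (qmul (K := K) X Y).sum (fun W a => a • (qmul W Z : List M →₀ K))
        = (qmul (K := K) Y Z).sum (fun W a => a • (qmul X W : List M →₀ K)) :=
  stmt_14_general
end
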